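/- arXiv:1509.01175 — 3 statements merged into one kernel-verified Lean document; each statement's English description precedes it below -/
import Mathlib

section
/- Fix a > 0 and H ∈ (0,1). For every τ > 0, the function D(τ) = ∫₀^τ (τ−u) K(u) du admits the representation D(τ) = ( τ^{H+3/2} / Γ(H+5/2) ) · { 1 − ∫₀^{aτ} e^{−v} (1 − v/(aτ))^{H+3/2} dv }. -/
/-!
Write `p = H - 1/2`, so that `Γ(p + 1) K(u) = u^p - a ∫₀^u (u - s)^p e^{-as} ds`. Against
the weight `τ - u`, the first term gives `∫₀^τ (τ - u) u^p du = τ^{p+2} / ((p + 1)(p + 2))`.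
In the second term, exchanging the order of integration over the triangle `0 ≤ s ≤ u ≤ τ`
produces the same Beta-type integral on `[s, τ]`, whence
`Γ(p + 3) D(τ) = τ^{p+2} - a ∫₀^τ e^{-as} (τ - s)^{p+2} ds`,
and the substitution `v = a s` turns this into the stated formula.
-/

open MeasureTheory Real Set

/-- The moving-average kernel of the fractional Ornstein–Uhlenbeck process. -/
noncomputable def fouKernel (a H : ℝ) (t : ℝ) : ℝ :=
  (1 / Real.Gamma (H + 1/2)) *
    (t ^ (H - 1/2) - a * ∫ s in (0:ℝ)..t, (t - s) ^ (H - 1/2) * Real.exp (-a * s))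

/-- The skew function `D(τ) = ∫₀^τ (τ-u) K(u) du`. -/
noncomputable def fouD (a H : ℝ) (τ : ℝ) : ℝ :=
  ∫ u in (0:ℝ)..τ, (τ - u) * fouKernel a H u

def triangleIcc (a b : ℝ) : Set (ℝ × ℝ) := {z | a ≤ z.2 ∧ z.2 ≤ z.1 ∧ z.1 ≤ b}

lemma isCompact_triangleIcc (a b : ℝ) : IsCompact (triangleIcc a b) := by
  refine (isCompact_Icc.prod isCompact_Icc : IsCompact (Icc a b ×ˢ Icc a b)).of_isClosed_subset
    ?_ ?_
  · exact (isClosed_le continuous_const continuous_snd).inter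
      ((isClosed_le continuous_snd continuous_fst).inter
        (isClosed_le continuous_fst continuous_const))
  · rintro z ⟨h₁, h₂, h₃⟩
    exact ⟨⟨h₁.trans h₂, h₃⟩, h₁, h₂.trans h₃⟩

section
variable {E : Type*} [NormedAddCommGroup E] [NormedSpace ℝ E] {f : ℝ → ℝ → E} {a b : ℝ}

lemma integral_indicator_triangleIcc_left (u : ℝ) :
    ∫ s, (triangleIcc a b).indicator (Function.uncurry f) (u, s) =
      (Icc a b).indicator (fun u => ∫ s in a..u, f u s) u := by
  by_cases hu : u ∈ Icc a b
  · rw [indicator_of_mem hu, intervalIntegral.integral_of_le hu.1, ← integral_Icc_eq_integral_Ioc,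
      ← integral_indicator measurableSet_Icc]
    congr 1 with s
    simp [triangleIcc, indicator, hu.2, Function.uncurry]
  · rw [indicator_of_notMem hu, ← integral_zero ℝ E]
    congr 1 with s
    exact indicator_of_notMem (fun h => hu ⟨h.1.trans h.2.1, h.2.2⟩) _

lemma integral_indicator_triangleIcc_right (s : ℝ) :
    ∫ u, (triangleIcc a b).indicator (Function.uncurry f) (u, s) =
      (Icc a b).indicator (fun s => ∫ u in s..b, f u s) s := by
  by_cases hs : s ∈ Icc a b
  · rw [indicator_of_mem hs, intervalIntegral.integral_of_le hs.2, ← integral_Icc_eq_integral_Ioc,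
      ← integral_indicator measurableSet_Icc]
    congr 1 with u
    simp [triangleIcc, indicator, hs.1, Function.uncurry, and_comm]
  · rw [indicator_of_notMem hs, ← integral_zero ℝ E]
    congr 1 with u
    exact indicator_of_notMem (fun h => hs ⟨h.1, h.2.1.trans h.2.2⟩) _

theorem intervalIntegral_integral_swap_triangleIcc (hab : a ≤ b)
    (hf : IntegrableOn (Function.uncurry f) (triangleIcc a b)) :
    ∫ u in a..b, ∫ s in a..u, f u s = ∫ s in a..b, ∫ u in s..b, f u s := by
  have hIcc (g : ℝ → E) : ∫ x, (Icc a b).indicator g x = ∫ x in a..b, g x := by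
    rw [integral_indicator measurableSet_Icc, integral_Icc_eq_integral_Ioc,
      intervalIntegral.integral_of_le hab]
  rw [← integrable_indicator_iff (isCompact_triangleIcc a b).measurableSet] at hf
  rw [← hIcc, ← hIcc]
  simp_rw [← integral_indicator_triangleIcc_left, ← integral_indicator_triangleIcc_right]
  exact integral_integral_swap hf

end

section

variable {p : ℝ}

/-- The shear `(u, s) ↦ (u - s, s)` turns the integrand into `w ^ p` on a subset of
`[0, b - a] × [a, b]`. -/
lemma integrableOn_triangleIcc_sub_rpow (hp : -1 < p) (a b : ℝ) :
    IntegrableOn (fun z : ℝ × ℝ => (z.1 - z.2) ^ p) (triangleIcc a b) := by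
  set S : Set (ℝ × ℝ) := {z | a ≤ z.2 ∧ 0 ≤ z.1 ∧ z.1 + z.2 ≤ b}
  have hS : MeasurableSet S := (measurableSet_le measurable_const measurable_snd).inter
    ((measurableSet_le measurable_const measurable_fst).inter
      (measurableSet_le (measurable_fst.add measurable_snd) measurable_const))
  set g := S.indicator fun z : ℝ × ℝ => z.1 ^ p
  have hg : AEStronglyMeasurable g :=
    ((measurable_fst.pow_const p).indicator hS).aestronglyMeasurable
  have hshear : (triangleIcc a b).indicator (fun z : ℝ × ℝ => (z.1 - z.2) ^ p) =
      g ∘ fun z => (z.1 - z.2, z.2) := by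
    have hT : triangleIcc a b = (fun z : ℝ × ℝ => (z.1 - z.2, z.2)) ⁻¹' S := by
      ext z
      simp [triangleIcc, S]
    ext z
    rw [hT]
    exact indicator_comp_right (g := fun z : ℝ × ℝ => z.1 ^ p) _
  rw [← integrable_indicator_iff (isCompact_triangleIcc a b).measurableSet, hshear]
  refine ((measurePreserving_sub_prod volume volume).integrable_comp hg).2 ?_
  have hpow : Integrable ((Icc 0 (b - a)).indicator fun w : ℝ => w ^ p) :=
    (integrable_indicator_iff measurableSet_Icc).2
      (((intervalIntegrable_iff' (f := fun w : ℝ => w ^ p)).1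
        (intervalIntegral.intervalIntegrable_rpow' hp)).mono_set Icc_subset_uIcc)
  have hone : Integrable ((Icc a b).indicator fun _ : ℝ => (1 : ℝ)) :=
    (integrable_indicator_iff measurableSet_Icc).2 (integrableOn_const measure_Icc_lt_top.ne)
  refine (hpow.mul_prod hone).mono' hg ?_
  refine Filter.Eventually.of_forall fun z => ?_
  by_cases hz : z ∈ S
  · obtain ⟨h₁, h₂, h₃⟩ := hz
    rw [indicator_of_mem (show z.1 ∈ Icc 0 (b - a) by constructor <;> linarith),
      indicator_of_mem (show z.2 ∈ Icc a b by constructor <;> linarith)]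
    simp [g, indicator_of_mem (show z ∈ S from ⟨h₁, h₂, h₃⟩), abs_rpow_of_nonneg h₂,
      abs_of_nonneg h₂]
  · simp only [g, indicator_of_notMem hz, norm_zero]
    exact mul_nonneg (indicator_nonneg (fun w hw => rpow_nonneg hw.1 p) _)
      (indicator_nonneg (fun _ _ => zero_le_one) _)

lemma integral_sub_mul_rpow (hp : -1 < p) {c : ℝ} (hc : 0 ≤ c) :
    ∫ x in 0..c, (c - x) * x ^ p = c ^ (p + 2) / ((p + 1) * (p + 2)) := by
  have h₁ : p + 1 ≠ 0 := by linarith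
  have h₂ : p + 1 + 1 ≠ 0 := by linarith
  have hsplit : ∀ x ∈ uIcc 0 c, (c - x) * x ^ p = c * x ^ p - x ^ (p + 1) := fun x hx => by
    rw [rpow_add_one' (uIcc_of_le hc ▸ hx).1 h₁]
    ring
  rw [intervalIntegral.integral_congr hsplit, intervalIntegral.integral_sub
      ((intervalIntegral.intervalIntegrable_rpow' hp).const_mul c)
      (intervalIntegral.intervalIntegrable_rpow' (by linarith)),
    intervalIntegral.integral_const_mul, integral_rpow (Or.inl hp),
    integral_rpow (Or.inl (by linarith)), zero_rpow h₁, zero_rpow h₂,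
    show p + 2 = p + 1 + 1 by ring, rpow_add_one' (y := p + 1) hc h₂]
  field_simp
  ring

lemma integral_sub_mul_sub_rpow (hp : -1 < p) {s t : ℝ} (hst : s ≤ t) :
    ∫ u in s..t, (t - u) * (u - s) ^ p = (t - s) ^ (p + 2) / ((p + 1) * (p + 2)) := by
  rw [← integral_sub_mul_rpow hp (sub_nonneg.2 hst), ← sub_self s,
    ← intervalIntegral.integral_comp_sub_right]
  simp only [sub_sub_sub_cancel_right]

lemma integral_sub_rpow_mul_exp (a u : ℝ) :
    ∫ s in 0..u, (u - s) ^ p * exp (-a * s) = exp (-a * u) * ∫ w in 0..u, w ^ p * exp (a * w) := by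
  rw [← intervalIntegral.integral_const_mul]
  calc ∫ s in 0..u, (u - s) ^ p * exp (-a * s)
      = ∫ s in 0..u, exp (-a * u) * ((u - s) ^ p * exp (a * (u - s))) := by
        congr 1 with s
        rw [mul_left_comm, ← exp_add]
        ring_nf
    _ = ∫ w in 0..u, exp (-a * u) * (w ^ p * exp (a * w)) := by
        simpa using intervalIntegral.integral_comp_sub_left
          (fun w => exp (-a * u) * (w ^ p * exp (a * w))) u (a := 0) (b := u)

lemma continuous_integral_sub_rpow_mul_exp (hp : -1 < p) (a : ℝ) :
    Continuous fun u => ∫ s in 0..u, (u - s) ^ p * exp (-a * s) := by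
  simp_rw [integral_sub_rpow_mul_exp]
  exact (by fun_prop : Continuous fun u => exp (-a * u)).mul
    (intervalIntegral.continuous_primitive (fun _ _ =>
      (intervalIntegral.intervalIntegrable_rpow' hp).mul_continuousOn (by fun_prop)) 0)

lemma integral_sub_mul_integral_sub_rpow_mul_exp (hp : -1 < p) (a : ℝ) {τ : ℝ} (hτ : 0 ≤ τ) :
    ∫ u in 0..τ, (τ - u) * ∫ s in 0..u, (u - s) ^ p * exp (-a * s) =
      (∫ s in 0..τ, exp (-a * s) * (τ - s) ^ (p + 2)) / ((p + 1) * (p + 2)) := by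
  have hint : IntegrableOn (Function.uncurry fun u s => (τ - u) * ((u - s) ^ p * exp (-a * s)))
      (triangleIcc 0 τ) := by
    refine ((integrableOn_triangleIcc_sub_rpow hp 0 τ).continuousOn_mul
      (g := fun z : ℝ × ℝ => (τ - z.1) * exp (-a * z.2)) (by fun_prop)
      (isCompact_triangleIcc 0 τ)).congr_fun (fun z _ => by dsimp [Function.uncurry]; ring)
      (isCompact_triangleIcc 0 τ).measurableSet
  calc ∫ u in 0..τ, (τ - u) * ∫ s in 0..u, (u - s) ^ p * exp (-a * s)
      = ∫ u in 0..τ, ∫ s in 0..u, (τ - u) * ((u - s) ^ p * exp (-a * s)) := by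
        simp_rw [intervalIntegral.integral_const_mul]
    _ = ∫ s in 0..τ, ∫ u in s..τ, (τ - u) * ((u - s) ^ p * exp (-a * s)) :=
        intervalIntegral_integral_swap_triangleIcc hτ hint
    _ = ∫ s in 0..τ, exp (-a * s) * (τ - s) ^ (p + 2) / ((p + 1) * (p + 2)) := by
        refine intervalIntegral.integral_congr fun s hs => ?_
        have hcomm (u : ℝ) : (τ - u) * ((u - s) ^ p * exp (-a * s)) =
            exp (-a * s) * ((τ - u) * (u - s) ^ p) := by ring
        simp_rw [hcomm, intervalIntegral.integral_const_mul,
          integral_sub_mul_sub_rpow hp (uIcc_of_le hτ ▸ hs).2, mul_div_assoc]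
    _ = _ := intervalIntegral.integral_div _ _

end

lemma integral_exp_neg_mul_one_sub_div_rpow (a q : ℝ) {τ : ℝ} (hτ : 0 < τ) :
    ∫ v in 0..a * τ, exp (-v) * (1 - v / (a * τ)) ^ q =
      a / τ ^ q * ∫ s in 0..τ, exp (-a * s) * (τ - s) ^ q := by
  rcases eq_or_ne a 0 with rfl | ha
  · simp
  have hsub := intervalIntegral.smul_integral_comp_mul_left
    (fun v => exp (-v) * (1 - v / (a * τ)) ^ q) a (a := 0) (b := τ)
  rw [mul_zero] at hsub
  rw [← hsub, smul_eq_mul, div_mul_eq_mul_div, mul_div_assoc, ← intervalIntegral.integral_div]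
  congr 1
  refine intervalIntegral.integral_congr fun s hs => ?_
  have hsτ : s ≤ τ := (uIcc_of_le hτ.le ▸ hs).2
  rw [mul_div_mul_left s τ ha, show 1 - s / τ = (τ - s) / τ by field_simp,
    div_rpow (sub_nonneg.2 hsτ) hτ.le, neg_mul, mul_div_assoc]

lemma fouD_eq_div_Gamma (a : ℝ) {H τ : ℝ} (hH : -1 / 2 < H) (hτ : 0 ≤ τ) :
    fouD a H τ =
      (τ ^ (H + 3 / 2) - a * ∫ s in 0..τ, exp (-a * s) * (τ - s) ^ (H + 3 / 2)) /
        Gamma (H + 5 / 2) := by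
  have hp : -1 < H - 1 / 2 := by linarith
  have hΓ : Gamma (H + 5 / 2) = (H - 1 / 2 + 1) * (H - 1 / 2 + 2) * Gamma (H + 1 / 2) := by
    rw [show H + 5 / 2 = H + 3 / 2 + 1 by ring, Gamma_add_one (by linarith),
      show H + 3 / 2 = H + 1 / 2 + 1 by ring, Gamma_add_one (by linarith)]
    ring_nf
  have hcont := continuous_integral_sub_rpow_mul_exp hp a
  calc fouD a H τ
      = ∫ u in 0..τ, 1 / Gamma (H + 1 / 2) * ((τ - u) * u ^ (H - 1 / 2) -
          a * ((τ - u) * ∫ s in 0..u, (u - s) ^ (H - 1 / 2) * exp (-a * s))) := by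
        simp only [fouD, fouKernel]
        congr 1 with u
        ring
    _ = 1 / Gamma (H + 1 / 2) * ((∫ u in 0..τ, (τ - u) * u ^ (H - 1 / 2)) -
          a * ∫ u in 0..τ, (τ - u) * ∫ s in 0..u, (u - s) ^ (H - 1 / 2) * exp (-a * s)) := by
        rw [intervalIntegral.integral_const_mul, intervalIntegral.integral_sub
          ((intervalIntegral.intervalIntegrable_rpow' hp).continuousOn_mul (by fun_prop))
          (Continuous.intervalIntegrable (by fun_prop) _ _), intervalIntegral.integral_const_mul]
    _ = _ := by
        rw [integral_sub_mul_rpow hp hτ, integral_sub_mul_integral_sub_rpow_mul_exp hp a hτ, hΓ,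
          show H + 3 / 2 = H - 1 / 2 + 2 by ring]
        field_simp

theorem fouD_representation_general (a H : ℝ) (hH : H ∈ Set.Ioo (0:ℝ) 1)
    (τ : ℝ) (hτ : 0 < τ) :
    fouD a H τ = (τ ^ (H + 3/2) / Real.Gamma (H + 5/2)) *
      (1 - ∫ v in (0:ℝ)..(a * τ), Real.exp (-v) * (1 - v / (a * τ)) ^ (H + 3/2)) := by
  have hτq : τ ^ (H + 3 / 2) ≠ 0 := (rpow_pos_of_pos hτ _).ne'
  rw [fouD_eq_div_Gamma a (by linarith [hH.1]) hτ.le, integral_exp_neg_mul_one_sub_div_rpow a _ hτ]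
  field_simp

theorem fouD_representation (a H : ℝ) (ha : 0 < a) (hH : H ∈ Set.Ioo (0:ℝ) 1)
    (τ : ℝ) (hτ : 0 < τ) :
    fouD a H τ = (τ ^ (H + 3/2) / Real.Gamma (H + 5/2)) *
      (1 - ∫ v in (0:ℝ)..(a * τ), Real.exp (-v) * (1 - v / (a * τ)) ^ (H + 3/2)) :=
  fouD_representation_general a H hH τ hτ
end

section
/- Fix a > 0 and H ∈ (0,1). Then D(τ) · Γ(H+3/2) · a · τ^{−H−1/2} → 1 as τ → ∞; equivalently, D(τ) = (1/(Γ(H+3/2) a^{H+3/2})) ( (aτ)^{H+1/2} + o( (aτ)^{H+1/2} ) ) as τ → ∞. -/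
open MeasureTheory Real Set Filter Topology

/-!
With `E_c(t) = ∫₀ᵗ (t - s)^c e^{-as} ds` one has `E_c' = t^c - a E_c`, so
`Γ(H + 1/2) K = E_{H-1/2}'`, and integrating `w^{c+1} e^{aw}` by parts gives
`E_{c+1}' = (c + 1) E_c`. Integrating `D` by parts thus yields `Γ(H + 3/2) D = E_{H+1/2}`.
Finally `τ^{-p} E_p(τ) = ∫₀^τ (1 - s/τ)^p e^{-as} ds`, which tends to `∫₀^∞ e^{-as} ds = 1/a`
by dominated convergence.
-/

/-- The integral in `fouKernel a H t` is `powConvExp a (H - 1/2) t`. -/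
noncomputable def powConvExp (a c t : ℝ) : ℝ := ∫ s in (0:ℝ)..t, (t - s) ^ c * exp (-a * s)

lemma powConvExp_eq_exp_mul_integral (a c t : ℝ) :
    powConvExp a c t = exp (-(a * t)) * ∫ w in (0:ℝ)..t, w ^ c * exp (a * w) := by
  have hsplit : ∀ s, (t - s) ^ c * exp (-a * s)
      = exp (-(a * t)) * ((t - s) ^ c * exp (a * (t - s))) := fun s => by
    rw [mul_left_comm, ← exp_add]
    ring_nf
  simp_rw [powConvExp, hsplit, intervalIntegral.integral_comp_sub_left
    (fun w => exp (-(a * t)) * (w ^ c * exp (a * w))), sub_self, sub_zero,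
    intervalIntegral.integral_const_mul]

@[simp]
lemma powConvExp_zero (a c : ℝ) : powConvExp a c 0 = 0 := by
  simp [powConvExp]

lemma rpow_neg_mul_powConvExp (a c : ℝ) {t : ℝ} (ht : 0 < t) :
    t ^ (-c) * powConvExp a c t = ∫ s in (0:ℝ)..t, (1 - s / t) ^ c * exp (-a * s) := by
  rw [powConvExp, ← intervalIntegral.integral_const_mul]
  refine intervalIntegral.integral_congr fun s hs => ?_
  rw [uIcc_of_le ht.le] at hs
  rw [one_sub_div ht.ne', div_rpow (by linarith [hs.2]) ht.le, rpow_neg ht.le]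
  ring

section powConvExp

variable (a : ℝ) {c : ℝ}

lemma intervalIntegrable_rpow_mul_exp (hc : -1 < c) (x y : ℝ) :
    IntervalIntegrable (fun w => w ^ c * exp (a * w)) volume x y :=
  (intervalIntegral.intervalIntegrable_rpow' hc).mul_continuousOn (by fun_prop)

lemma continuous_powConvExp (hc : -1 < c) : Continuous (powConvExp a c) := by
  simp_rw [funext (powConvExp_eq_exp_mul_integral a c)]
  exact (by fun_prop : Continuous fun t => exp (-(a * t))).mul
    (intervalIntegral.continuous_primitive (intervalIntegrable_rpow_mul_exp a hc) 0)

lemma hasDerivAt_powConvExp (hc : -1 < c) {t : ℝ} (ht : 0 < t) :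
    HasDerivAt (powConvExp a c) (t ^ c - a * powConvExp a c t) t := by
  have hP : HasDerivAt (fun t => ∫ w in (0:ℝ)..t, w ^ c * exp (a * w))
      (t ^ c * exp (a * t)) t :=
    intervalIntegral.integral_hasDerivAt_right (intervalIntegrable_rpow_mul_exp a hc 0 t)
      (((continuousOn_id.rpow_const fun x hx => Or.inl (ne_of_gt hx)).mul
        (by fun_prop)).stronglyMeasurableAtFilter isOpen_Ioi t ht)
      ((continuousAt_id.rpow_const (Or.inl ht.ne')).mul (by fun_prop))
  have hexp : HasDerivAt (fun t => exp (-(a * t))) (-a * exp (-(a * t))) t := by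
    simpa [mul_comm] using ((hasDerivAt_id t).const_mul a).neg.exp
  rw [show powConvExp a c = _ from funext (powConvExp_eq_exp_mul_integral a c)]
  refine (hexp.mul hP).congr_deriv ?_
  rw [mul_left_comm, ← exp_add, neg_add_cancel, exp_zero]
  ring

lemma rpow_add_one_sub_mul_powConvExp (hc : -1 < c) {t : ℝ} (ht : 0 ≤ t) :
    t ^ (c + 1) - a * powConvExp a (c + 1) t = (c + 1) * powConvExp a c t := by
  have hc1 : 0 < c + 1 := by linarith
  have hparts := intervalIntegral.integral_deriv_mul_eq_sub_of_hasDerivAt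
    (u := fun w => w ^ (c + 1)) (v := fun w => exp (a * w))
    (u' := fun w => (c + 1) * w ^ c) (v' := fun w => a * exp (a * w)) (a := 0) (b := t)
    (continuous_rpow_const hc1.le).continuousOn (by fun_prop)
    (fun x hx => by
      have hx0 : 0 < x := by simpa [ht] using hx.1
      simpa using hasDerivAt_rpow_const (p := c + 1) (Or.inl hx0.ne'))
    (fun x _ => by simpa [mul_comm] using ((hasDerivAt_id x).const_mul a).exp)
    ((intervalIntegral.intervalIntegrable_rpow' hc).const_mul _)
    ((by fun_prop : Continuous fun w => a * exp (a * w)).intervalIntegrable 0 t)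
  have hsum : (c + 1) * (∫ w in (0:ℝ)..t, w ^ c * exp (a * w))
      + a * ∫ w in (0:ℝ)..t, w ^ (c + 1) * exp (a * w) = t ^ (c + 1) * exp (a * t) := by
    rw [← intervalIntegral.integral_const_mul, ← intervalIntegral.integral_const_mul,
      ← intervalIntegral.integral_add (((intervalIntegrable_rpow_mul_exp a hc) 0 t).const_mul _)
        (((intervalIntegrable_rpow_mul_exp a (by linarith)) 0 t).const_mul _)]
    simp only [zero_rpow hc1.ne', zero_mul, sub_zero] at hparts
    rw [← hparts]
    exact intervalIntegral.integral_congr fun w _ => by ring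
  have hexp : exp (-(a * t)) * exp (a * t) = 1 := by rw [← exp_add, neg_add_cancel, exp_zero]
  rw [powConvExp_eq_exp_mul_integral, powConvExp_eq_exp_mul_integral]
  linear_combination (-exp (-(a * t))) * hsum - t ^ (c + 1) * hexp

lemma integral_powConvExp (hc : -1 < c) {t : ℝ} (ht : 0 ≤ t) :
    (c + 1) * ∫ s in (0:ℝ)..t, powConvExp a c s = powConvExp a (c + 1) t := by
  rw [← intervalIntegral.integral_const_mul,
    intervalIntegral.integral_eq_sub_of_hasDeriv_right_of_le ht
      (continuous_powConvExp (c := c + 1) a (by linarith)).continuousOn (fun x hx => ?_)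
      (((continuous_powConvExp a hc).intervalIntegrable 0 t).const_mul _),
    powConvExp_zero, sub_zero]
  rw [← rpow_add_one_sub_mul_powConvExp a hc hx.1.le]
  exact (hasDerivAt_powConvExp a (by linarith) hx.1).hasDerivWithinAt

end powConvExp

section fouD

variable (a : ℝ) {H : ℝ}

lemma Gamma_mul_fouKernel (hH : -1/2 < H) (u : ℝ) :
    Gamma (H + 1/2) * fouKernel a H u = u ^ (H - 1/2) - a * powConvExp a (H - 1/2) u := by
  rw [fouKernel, ← powConvExp, ← mul_assoc,
    mul_one_div_cancel (Gamma_pos_of_pos (by linarith)).ne', one_mul]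

lemma Gamma_mul_fouD_eq_integral_powConvExp (hH : -1/2 < H) {τ : ℝ} (hτ : 0 ≤ τ) :
    Gamma (H + 1/2) * fouD a H τ = ∫ u in (0:ℝ)..τ, powConvExp a (H - 1/2) u := by
  have hν : -1 < H - 1/2 := by linarith
  simp_rw [fouD, ← intervalIntegral.integral_const_mul, mul_left_comm (Gamma _),
    Gamma_mul_fouKernel a hH]
  rw [intervalIntegral.integral_mul_deriv_eq_deriv_mul_of_hasDerivAt (u' := fun _ => -1)
      (by fun_prop) (continuous_powConvExp a hν).continuousOn
      (fun x _ => by simpa using (hasDerivAt_id x).const_sub τ)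
      (fun x hx => hasDerivAt_powConvExp a hν (by simpa [hτ] using hx.1))
      intervalIntegrable_const
      ((intervalIntegral.intervalIntegrable_rpow' hν).sub
        (((continuous_powConvExp a hν).intervalIntegrable 0 τ).const_mul a))]
  simp [intervalIntegral.integral_neg]

lemma Gamma_mul_fouD (hH : -1/2 < H) {τ : ℝ} (hτ : 0 ≤ τ) :
    Gamma (H + 3/2) * fouD a H τ = powConvExp a (H + 1/2) τ := by
  have hν : -1 < H - 1/2 := by linarith
  rw [show H + 3/2 = (H + 1/2) + 1 by ring, Gamma_add_one (by linarith), mul_assoc,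
    Gamma_mul_fouD_eq_integral_powConvExp a hH hτ]
  convert integral_powConvExp a hν hτ using 2 <;> ring

end fouD

section asymptotics

variable {a c : ℝ}

lemma tendsto_integral_one_sub_div_rpow_mul_exp (ha : 0 < a) (hc : 0 ≤ c) :
    Tendsto (fun t => ∫ s in (0:ℝ)..t, (1 - s / t) ^ c * exp (-a * s)) atTop (𝓝 a⁻¹) := by
  set F : ℝ → ℝ → ℝ := fun t => (Iic t).indicator fun s => (1 - s / t) ^ c * exp (-a * s)
  have hF : ∀ t, 0 ≤ t →
      ∫ s in Ioi 0, F t s = ∫ s in (0:ℝ)..t, (1 - s / t) ^ c * exp (-a * s) := fun t ht => by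
    rw [intervalIntegral.integral_of_le ht, setIntegral_indicator measurableSet_Iic, Ioi_inter_Iic]
  have hlim : ∫ s in Ioi 0, exp (-a * s) = a⁻¹ := by
    rw [integral_exp_mul_Ioi (neg_neg_of_pos ha)]
    simp
  rw [← hlim]
  refine (tendsto_integral_filter_of_dominated_convergence (F := F) _ ?_ ?_
    (integrableOn_exp_mul_Ioi (neg_neg_of_pos ha) 0) ?_).congr' ?_
  · exact .of_forall fun t =>
      (Measurable.indicator (by fun_prop) measurableSet_Iic).aestronglyMeasurable
  · filter_upwards [eventually_gt_atTop 0] with t ht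
    filter_upwards [ae_restrict_mem measurableSet_Ioi] with s hs
    dsimp only [F]
    by_cases hst : s ≤ t
    · have hbase : 0 ≤ 1 - s / t := by rw [sub_nonneg, div_le_one ht]; exact hst
      have hbase' : 1 - s / t ≤ 1 := by linarith [div_pos (mem_Ioi.mp hs) ht]
      rw [indicator_of_mem (mem_Iic.mpr hst), norm_mul, norm_of_nonneg (rpow_nonneg hbase c),
        norm_of_nonneg (exp_pos _).le]
      exact mul_le_of_le_one_left (exp_pos _).le (rpow_le_one hbase hbase' hc)
    · rw [indicator_of_notMem (notMem_Iic.mpr (not_le.mp hst)), norm_zero]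
      exact (exp_pos _).le
  · refine .of_forall fun s => ?_
    have hbase : Tendsto (fun t => 1 - s / t) atTop (𝓝 1) := by
      simpa using (tendsto_const_nhds (x := (1:ℝ))).sub
        ((tendsto_const_nhds (x := s)).div_atTop tendsto_id)
    have hpow := (hbase.rpow_const (p := c) (Or.inl one_ne_zero)).mul_const (exp (-a * s))
    rw [one_rpow, one_mul] at hpow
    refine hpow.congr' ?_
    filter_upwards [eventually_ge_atTop s] with t hst
    exact (indicator_of_mem (mem_Iic.mpr hst) (fun s => (1 - s / t) ^ c * exp (-a * s))).symm
  · filter_upwards [eventually_ge_atTop 0] with t ht using hF t ht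

lemma tendsto_rpow_neg_mul_powConvExp (ha : 0 < a) (hc : 0 ≤ c) :
    Tendsto (fun t => t ^ (-c) * powConvExp a c t) atTop (𝓝 a⁻¹) :=
  (tendsto_integral_one_sub_div_rpow_mul_exp ha hc).congr' <|
    (eventually_gt_atTop 0).mono fun _ ht => (rpow_neg_mul_powConvExp a c ht).symm

end asymptotics

theorem fouD_asymptotics_infinity (a H : ℝ) (ha : 0 < a) (hH : H ∈ Set.Ioo (0:ℝ) 1) :
    Tendsto (fun τ : ℝ => fouD a H τ * Real.Gamma (H + 3/2) * a * τ ^ (-H - 1/2))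
      atTop (𝓝 1) := by
  have hH' : -1/2 < H := by linarith [hH.1]
  have hlim := (tendsto_rpow_neg_mul_powConvExp ha (c := H + 1/2) (by linarith)).const_mul a
  rw [mul_inv_cancel₀ ha.ne'] at hlim
  refine hlim.congr' ?_
  filter_upwards [eventually_ge_atTop 0] with τ hτ
  rw [← Gamma_mul_fouD a hH' hτ, neg_add']
  ring
end

section
/- Let H ∈ (1/2,1), let K : (0,∞) → ℝ be locally integrable, and suppose there exists c_Z ≠ 0 such that K(t) · t^{3/2−H} → c_Z as t → ∞. Then D(τ) = ∫₀^τ (τ−u) K(u) du satisfies D(τ) · τ^{−H−1/2} → c_Z Γ(H−1/2) / Γ(H+3/2) as τ → ∞; equivalently D(τ) = c_Z ( Γ(H−1/2)/Γ(H+3/2) ) τ^{H+1/2} (1+o(1)) as τ → ∞. -/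
/-!
Write `a = H - 3/2 ∈ (-1, -1/2)`, so that `K u ≈ c_Z u^a` at infinity. For the model kernel
`u^a` the integral is explicit: `∫₀^τ (τ - u) u^a du = τ^(a+2) / ((a+1)(a+2))`, and
`1 / ((a+1)(a+2)) = Γ(a+1) / Γ(a+3)`. The remainder `g = K - c_Z u^a` is `o(u^a)`; splitting its
integral at a large `A`, the part over `(0, A]` is `O(τ)` and the part over `(A, τ]` is at most
`ε τ^(a+2) / ((a+1)(a+2))`, and `τ = o(τ^(a+2))` because `a > -1`.
-/

open MeasureTheory Real Set Filter Topology Asymptotics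
open scoped Interval

lemma mul_Gamma_div_Gamma_add_two (c : ℝ) {s : ℝ} (hs : 0 < s) :
    c * Gamma s / Gamma (s + 2) = c / (s * (s + 1)) := by
  have hΓ : Gamma (s + 2) = s * (s + 1) * Gamma s := by
    rw [show s + 2 = s + 1 + 1 by ring, Gamma_add_one (by linarith), Gamma_add_one hs.ne']
    ring
  have := (Gamma_pos_of_pos hs).ne'
  rw [hΓ]
  field_simp

lemma isLittleO_rpow_rpow_atTop {r s : ℝ} (h : r < s) :
    (fun x : ℝ => x ^ r) =o[atTop] (fun x => x ^ s) := by
  rw [isLittleO_iff_tendsto' ((eventually_gt_atTop 0).mono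
    fun x hx h0 => ((rpow_pos_of_pos hx s).ne' h0).elim)]
  refine (tendsto_rpow_neg_atTop (sub_pos.2 h)).congr' ?_
  filter_upwards [eventually_gt_atTop 0] with x hx
  rw [← rpow_sub hx, neg_sub]

lemma integral_sub_mul_rpow_s17 {a τ : ℝ} (ha : -1 < a) (hτ : 0 ≤ τ) :
    ∫ u in (0 : ℝ)..τ, (τ - u) * u ^ a = τ ^ (a + 2) / ((a + 1) * (a + 2)) := by
  have ha₁ : a + 1 ≠ 0 := by linarith
  have ha₂ : a + 1 + 1 ≠ 0 := by linarith
  have hsplit : EqOn (fun u => (τ - u) * u ^ a) (fun u => τ * u ^ a - u ^ (a + 1)) [[0, τ]] := by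
    intro u hu
    rw [uIcc_of_le hτ] at hu
    simp only [rpow_add_one' hu.1 ha₁]
    ring
  rw [intervalIntegral.integral_congr hsplit,
    intervalIntegral.integral_sub ((intervalIntegral.intervalIntegrable_rpow' ha).const_mul τ)
      (intervalIntegral.intervalIntegrable_rpow' (by linarith)),
    intervalIntegral.integral_const_mul, integral_rpow (Or.inl ha),
    integral_rpow (Or.inl (by linarith)), zero_rpow ha₁, zero_rpow ha₂,
    show a + 2 = a + 1 + 1 by ring, rpow_add_one' hτ ha₂]
  field_simp
  ring

lemma norm_integral_sub_mul_le {g : ℝ → ℝ} {A τ : ℝ} (hA : 0 ≤ A) (hAτ : A ≤ τ)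
    (hg : IntegrableOn g (Ioc 0 A)) :
    ‖∫ u in (0 : ℝ)..A, (τ - u) * g u‖ ≤ τ * ∫ u in (0 : ℝ)..A, |g u| := by
  rw [← intervalIntegral.integral_const_mul]
  refine intervalIntegral.norm_integral_le_of_norm_le hA (ae_of_all _ fun u hu => ?_)
    (((intervalIntegrable_iff_integrableOn_Ioc_of_le hA).2 hg).abs.const_mul τ)
  rw [norm_mul, norm_of_nonneg (by linarith [hu.2]), norm_eq_abs]
  exact mul_le_mul_of_nonneg_right (by linarith [hu.1]) (abs_nonneg _)

lemma norm_integral_sub_mul_le_of_norm_le_rpow {g : ℝ → ℝ} {a ε A τ : ℝ} (ha : -1 < a)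
    (hA : 0 ≤ A) (hAτ : A ≤ τ) (hε : 0 ≤ ε) (hgA : ∀ u ∈ Ioc A τ, ‖g u‖ ≤ ε * u ^ a) :
    ‖∫ u in A..τ, (τ - u) * g u‖ ≤ ε * (τ ^ (a + 2) / ((a + 1) * (a + 2))) := by
  have hint : IntervalIntegrable (fun u => ε * ((τ - u) * u ^ a)) volume 0 τ :=
    ((intervalIntegral.intervalIntegrable_rpow' ha).continuousOn_mul (by fun_prop)).const_mul ε
  calc ‖∫ u in A..τ, (τ - u) * g u‖ ≤ ∫ u in A..τ, ε * ((τ - u) * u ^ a) := by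
        refine intervalIntegral.norm_integral_le_of_norm_le hAτ (ae_of_all _ fun u hu => ?_)
          (hint.mono_set (uIcc_subset_uIcc (mem_uIcc_of_le hA hAτ) right_mem_uIcc))
        rw [norm_mul, norm_of_nonneg (by linarith [hu.2])]
        nlinarith [hgA u hu, hu.2]
    _ ≤ ∫ u in (0 : ℝ)..τ, ε * ((τ - u) * u ^ a) := by
        refine intervalIntegral.integral_mono_interval hA hAτ le_rfl
          (ae_restrict_of_forall_mem measurableSet_Ioc fun u hu => ?_) hint
        have := rpow_nonneg hu.1.le a
        have : 0 ≤ τ - u := by linarith [hu.2]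
        positivity
    _ = ε * (τ ^ (a + 2) / ((a + 1) * (a + 2))) := by
        rw [intervalIntegral.integral_const_mul, integral_sub_mul_rpow_s17 ha (hA.trans hAτ)]

theorem isLittleO_integral_sub_mul {a : ℝ} (ha : -1 < a) {g : ℝ → ℝ}
    (hg : ∀ T, 0 < T → IntegrableOn g (Ioc 0 T)) (hgo : g =o[atTop] (· ^ a)) :
    (fun τ => ∫ u in (0 : ℝ)..τ, (τ - u) * g u) =o[atTop] (· ^ (a + 2)) := by
  have hC : 0 < (a + 1) * (a + 2) := mul_pos (by linarith) (by linarith)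
  refine IsLittleO.of_bound fun ε hε => ?_
  obtain ⟨A, hA⟩ := eventually_atTop.1
    ((hgo.bound (by positivity : 0 < ε / 2 * ((a + 1) * (a + 2)))).and (eventually_gt_atTop 0))
  have hA₀ : 0 < A := (hA A le_rfl).2
  set M := ∫ u in (0 : ℝ)..A, |g u|
  have hM : 0 ≤ M := intervalIntegral.integral_nonneg hA₀.le fun _ _ => abs_nonneg _
  have hhead := ((isLittleO_rpow_rpow_atTop (show (1 : ℝ) < a + 2 by linarith)).const_mul_left
    M).bound (half_pos hε)
  filter_upwards [hhead, eventually_ge_atTop A] with τ hτM hAτ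
  have hτ : 0 < τ := hA₀.trans_le hAτ
  have hint : IntervalIntegrable (fun u => (τ - u) * g u) volume 0 τ :=
    ((intervalIntegrable_iff_integrableOn_Ioc_of_le hτ.le).2 (hg τ hτ)).continuousOn_mul
      (by fun_prop)
  have htail := norm_integral_sub_mul_le_of_norm_le_rpow (g := g)
    (ε := ε / 2 * ((a + 1) * (a + 2))) ha hA₀.le hAτ (by positivity)
    fun u hu => by simpa [norm_of_nonneg (rpow_nonneg (hA₀.trans hu.1).le a)] using
      (hA u hu.1.le).1
  rw [rpow_one, norm_mul, norm_of_nonneg hM, norm_of_nonneg hτ.le,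
    norm_of_nonneg (rpow_nonneg hτ.le _)] at hτM
  rw [norm_of_nonneg (rpow_nonneg hτ.le _), ← intervalIntegral.integral_add_adjacent_intervals
    (hint.mono_set (uIcc_subset_uIcc left_mem_uIcc (mem_uIcc_of_le hA₀.le hAτ)))
    (hint.mono_set (uIcc_subset_uIcc (mem_uIcc_of_le hA₀.le hAτ) right_mem_uIcc))]
  calc _ ≤ ‖∫ u in (0 : ℝ)..A, (τ - u) * g u‖ + ‖∫ u in A..τ, (τ - u) * g u‖ :=
        norm_add_le _ _
    _ ≤ τ * M + ε / 2 * ((a + 1) * (a + 2)) * (τ ^ (a + 2) / ((a + 1) * (a + 2))) :=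
        add_le_add (norm_integral_sub_mul_le hA₀.le hAτ (hg A hA₀)) htail
    _ = τ * M + ε / 2 * τ ^ (a + 2) := by
        rw [mul_assoc, mul_div_cancel₀ _ hC.ne']
    _ ≤ ε * τ ^ (a + 2) := by linarith

theorem tendsto_integral_sub_mul_mul_rpow_neg {a c : ℝ} (ha : -1 < a) {K : ℝ → ℝ}
    (hK : ∀ T, 0 < T → IntegrableOn K (Ioc 0 T))
    (hlim : Tendsto (fun t => K t * t ^ (-a)) atTop (𝓝 c)) :
    Tendsto (fun τ => (∫ u in (0 : ℝ)..τ, (τ - u) * K u) * τ ^ (-(a + 2))) atTop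
      (𝓝 (c / ((a + 1) * (a + 2)))) := by
  set g := fun u => K u - c * u ^ a
  have hrpow : ∀ T : ℝ, 0 < T → IntegrableOn (fun u : ℝ => u ^ a) (Ioc 0 T) := fun T hT =>
    (intervalIntegrable_iff_integrableOn_Ioc_of_le hT.le).1
      (intervalIntegral.intervalIntegrable_rpow' ha)
  have hg : ∀ T, 0 < T → IntegrableOn g (Ioc 0 T) := fun T hT =>
    (hK T hT).sub ((hrpow T hT).const_mul c)
  have hgo : g =o[atTop] (· ^ a) := by
    rw [isLittleO_iff_tendsto' ((eventually_gt_atTop 0).mono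
      fun x hx h0 => ((rpow_pos_of_pos hx a).ne' h0).elim)]
    refine (sub_self c ▸ hlim.sub_const c).congr' ?_
    filter_upwards [eventually_gt_atTop 0] with t ht
    have := (rpow_pos_of_pos ht a).ne'
    simp only [g, rpow_neg ht.le]
    field_simp
  rw [← zero_add (c / _)]
  refine ((isLittleO_integral_sub_mul ha hg hgo).tendsto_div_nhds_zero.add_const _).congr' ?_
  filter_upwards [eventually_gt_atTop 0] with τ hτ
  have hint : ∀ f : ℝ → ℝ, IntegrableOn f (Ioc 0 τ) →
      IntervalIntegrable (fun u => (τ - u) * f u) volume 0 τ := fun f hf =>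
    ((intervalIntegrable_iff_integrableOn_Ioc_of_le hτ.le).2 hf).continuousOn_mul (by fun_prop)
  have hsplit : ∫ u in (0 : ℝ)..τ, (τ - u) * K u
      = (∫ u in (0 : ℝ)..τ, (τ - u) * g u) + c * (τ ^ (a + 2) / ((a + 1) * (a + 2))) := by
    rw [← integral_sub_mul_rpow_s17 ha hτ.le, ← intervalIntegral.integral_const_mul,
      ← intervalIntegral.integral_add (hint g (hg τ hτ)) ((hint _ (hrpow τ hτ)).const_mul c)]
    congr 1 with u
    ring
  have := (rpow_pos_of_pos hτ (a + 2)).ne'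
  rw [hsplit, rpow_neg hτ.le]
  field_simp

theorem general_kernel_D_long_time_general (H : ℝ) (hH : H ∈ Set.Ioo (1/2 : ℝ) 1)
    (K : ℝ → ℝ) (hK1 : ∀ T : ℝ, 0 < T → IntegrableOn K (Set.Ioc 0 T))
    (cZ : ℝ)
    (hKasym : Tendsto (fun t : ℝ => K t * t ^ (3/2 - H)) atTop (𝓝 cZ)) :
    Tendsto (fun τ : ℝ => (∫ u in (0:ℝ)..τ, (τ - u) * K u) * τ ^ (-H - 1/2))
      atTop
      (𝓝 (cZ * Real.Gamma (H - 1/2) / Real.Gamma (H + 3/2))) := by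
  have key := tendsto_integral_sub_mul_mul_rpow_neg (a := H - 3/2) (by linarith [hH.1]) hK1
    (by simpa only [neg_sub] using hKasym)
  rw [show H + 3/2 = H - 1/2 + 2 by ring, mul_Gamma_div_Gamma_add_two cZ (by linarith [hH.1])]
  convert key using 4 <;> ring

theorem general_kernel_D_long_time (H : ℝ) (hH : H ∈ Set.Ioo (1/2 : ℝ) 1)
    (K : ℝ → ℝ) (hK1 : ∀ T : ℝ, 0 < T → IntegrableOn K (Set.Ioc 0 T))
    (cZ : ℝ) (hcZ : cZ ≠ 0)
    (hKasym : Tendsto (fun t : ℝ => K t * t ^ (3/2 - H)) atTop (𝓝 cZ)) :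
    Tendsto (fun τ : ℝ => (∫ u in (0:ℝ)..τ, (τ - u) * K u) * τ ^ (-H - 1/2))
      atTop
      (𝓝 (cZ * Real.Gamma (H - 1/2) / Real.Gamma (H + 3/2))) :=
  general_kernel_D_long_time_general H hH K hK1 cZ hKasym
end
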